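/- For every p ∈ (0,1), the sequence g_p restricted to even arguments is nondecreasing: g_p(2n) ≤ g_p(2n+2) for all n ≥ 1; and restricted to odd arguments it is nonincreasing: g_p(2n+1) ≥ g_p(2n+3) for all n ≥ 1. -/
import Mathlib


open Real Set

noncomputable def lamR (p : ℝ) : ℝ := (1 - p - Real.sqrt ((1 - p) * (3 * p + 1))) / 2
noncomputable def lamPF (p : ℝ) : ℝ := (1 - p + Real.sqrt ((1 - p) * (3 * p + 1))) / 2
noncomputable def evRatio (p : ℝ) : ℝ := lamR p / lamPF p

noncomputable def gFun (p : ℝ) (n : ℕ) : ℝ :=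
  ((-1 : ℝ) ^ (n + 1) * |evRatio p| ^ n * (lamPF p / (1 - lamR p)) + lamPF p / (1 - lamPF p)) /
    ((-1 : ℝ) ^ n * |evRatio p| ^ (n - 1) * (1 / (1 - lamR p)) + 1 / (1 - lamPF p))

/-- Monotonicity step for even indices: `t ↦ (B - A t)/(C t + D)` is antitone. -/
lemma frac_even (A B C D t1 t2 : ℝ) (h1 : 0 < C * t1 + D) (h2 : 0 < C * t2 + D)
    (hpos : 0 ≤ B * C + A * D) (ht : t2 ≤ t1) :
    (B - A * t1) / (C * t1 + D) ≤ (B - A * t2) / (C * t2 + D) := by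
  rw [div_le_div_iff₀ h1 h2]
  nlinarith [mul_nonneg hpos (sub_nonneg.mpr ht)]

/-- Monotonicity step for odd indices: `t ↦ (B + A t)/(D - C t)` is monotone. -/
lemma frac_odd (A B C D t1 t2 : ℝ) (h1 : 0 < D - C * t1) (h2 : 0 < D - C * t2)
    (hpos : 0 ≤ B * C + A * D) (ht : t2 ≤ t1) :
    (B + A * t2) / (D - C * t2) ≤ (B + A * t1) / (D - C * t1) := by
  rw [div_le_div_iff₀ h2 h1]
  nlinarith [mul_nonneg hpos (sub_nonneg.mpr ht)]

lemma gFun_even (p : ℝ) (k : ℕ) :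
    gFun p (2 * k + 2) =
      (lamPF p / (1 - lamPF p) - (lamPF p / (1 - lamR p)) * |evRatio p| ^ (2 * k + 2)) /
        ((1 / (1 - lamR p)) * |evRatio p| ^ (2 * k + 1) + 1 / (1 - lamPF p)) := by
  have he : ((-1 : ℝ)) ^ (2 * k + 2) = 1 := Even.neg_one_pow ⟨k + 1, by ring⟩
  have ho : ((-1 : ℝ)) ^ (2 * k + 2 + 1) = -1 := Odd.neg_one_pow ⟨k + 1, by ring⟩
  show ((-1 : ℝ) ^ (2 * k + 2 + 1) * |evRatio p| ^ (2 * k + 2) * (lamPF p / (1 - lamR p)) +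
      lamPF p / (1 - lamPF p)) /
    ((-1 : ℝ) ^ (2 * k + 2) * |evRatio p| ^ (2 * k + 1) * (1 / (1 - lamR p)) +
      1 / (1 - lamPF p)) = _
  rw [he, ho]; ring

lemma gFun_odd (p : ℝ) (k : ℕ) :
    gFun p (2 * k + 3) =
      (lamPF p / (1 - lamPF p) + (lamPF p / (1 - lamR p)) * |evRatio p| ^ (2 * k + 3)) /
        (1 / (1 - lamPF p) - (1 / (1 - lamR p)) * |evRatio p| ^ (2 * k + 2)) := by
  have ho : ((-1 : ℝ)) ^ (2 * k + 3) = -1 := Odd.neg_one_pow ⟨k + 1, by ring⟩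
  have he : ((-1 : ℝ)) ^ (2 * k + 3 + 1) = 1 := Even.neg_one_pow ⟨k + 2, by ring⟩
  show ((-1 : ℝ) ^ (2 * k + 3 + 1) * |evRatio p| ^ (2 * k + 3) * (lamPF p / (1 - lamR p)) +
      lamPF p / (1 - lamPF p)) /
    ((-1 : ℝ) ^ (2 * k + 3) * |evRatio p| ^ (2 * k + 2) * (1 / (1 - lamR p)) +
      1 / (1 - lamPF p)) = _
  rw [he, ho]; ring

theorem gFun_parity_monotone (p : ℝ) (hp : p ∈ Ioo (0 : ℝ) 1) (n : ℕ) (hn : 1 ≤ n) :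
    gFun p (2 * n) ≤ gFun p (2 * n + 2) ∧ gFun p (2 * n + 3) ≤ gFun p (2 * n + 1) := by
  obtain ⟨hp0, hp1⟩ := hp
  obtain ⟨m, rfl⟩ : ∃ m, n = m + 1 := ⟨n - 1, by omega⟩
  set s : ℝ := Real.sqrt ((1 - p) * (3 * p + 1)) with hs
  have hsnn : 0 ≤ s := Real.sqrt_nonneg _
  have hssq : s ^ 2 = (1 - p) * (3 * p + 1) := by
    rw [hs, sq_sqrt]; nlinarith
  have hPFpos : 0 < lamPF p := by
    have : 0 < s := by
      rw [hs]; apply Real.sqrt_pos.mpr; nlinarith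
    rw [lamPF]; nlinarith
  have hPFlt : lamPF p < 1 := by
    have : s < 1 + p := by nlinarith
    rw [lamPF]; linarith
  have hRneg : lamR p < 0 := by
    have : 1 - p < s := by nlinarith
    rw [lamR]; linarith
  have hsum : lamR p + lamPF p = 1 - p := by rw [lamR, lamPF]; ring
  set b : ℝ := |evRatio p| with hbdef
  have hb0 : 0 ≤ b := abs_nonneg _
  have hb1 : b < 1 := by
    rw [hbdef, evRatio, abs_div, abs_of_pos hPFpos, abs_of_neg hRneg,
      div_lt_one hPFpos]
    linarith
  set A : ℝ := lamPF p / (1 - lamR p) with hA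
  set B : ℝ := lamPF p / (1 - lamPF p) with hB
  set C : ℝ := 1 / (1 - lamR p) with hC
  set D : ℝ := 1 / (1 - lamPF p) with hD
  have h1R : (0 : ℝ) < 1 - lamR p := by linarith
  have h1PF : (0 : ℝ) < 1 - lamPF p := by linarith
  have hApos : 0 < A := div_pos hPFpos h1R
  have hBpos : 0 < B := div_pos hPFpos h1PF
  have hCpos : 0 < C := by positivity
  have hDpos : 0 < D := by positivity
  have hCD : C < D := by
    rw [hC, hD]
    exact one_div_lt_one_div_of_lt h1PF (by linarith)
  have hble : ∀ j : ℕ, b ^ j ≤ 1 := fun j => pow_le_one₀ hb0 hb1.le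
  have hden_even : ∀ j : ℕ, 0 < C * b ^ j + D := fun j => by positivity
  have hden_odd : ∀ j : ℕ, 0 < D - C * b ^ j := fun j => by
    have h1 : C * b ^ j ≤ C := by
      nlinarith [hble j, pow_nonneg hb0 j]
    linarith
  have hpos : 0 ≤ B * C + A * b * D := by positivity
  constructor
  · rw [show 2 * (m + 1) = 2 * m + 2 by ring, show 2 * m + 2 + 2 = 2 * (m + 1) + 2 by ring,
      gFun_even p m, gFun_even p (m + 1), ← hbdef, ← hA, ← hB, ← hC, ← hD]
    have e1 : A * b ^ (2 * m + 2) = A * b * b ^ (2 * m + 1) := by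
      rw [show 2 * m + 2 = (2 * m + 1) + 1 by ring, pow_succ]; ring
    have e2 : A * b ^ (2 * (m + 1) + 2) = A * b * b ^ (2 * (m + 1) + 1) := by
      rw [show 2 * (m + 1) + 2 = (2 * (m + 1) + 1) + 1 by ring, pow_succ]; ring
    rw [e1, e2]
    exact frac_even (A * b) B C D (b ^ (2 * m + 1)) (b ^ (2 * (m + 1) + 1))
      (hden_even _) (hden_even _) hpos
      (pow_le_pow_of_le_one hb0 hb1.le (by omega))
  · rw [show 2 * (m + 1) + 1 = 2 * m + 3 by ring,
      gFun_odd p (m + 1), gFun_odd p m, ← hbdef, ← hA, ← hB, ← hC, ← hD]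
    have e1 : A * b ^ (2 * m + 3) = A * b * b ^ (2 * m + 2) := by
      rw [show 2 * m + 3 = (2 * m + 2) + 1 by ring, pow_succ]; ring
    have e2 : A * b ^ (2 * (m + 1) + 3) = A * b * b ^ (2 * (m + 1) + 2) := by
      rw [show 2 * (m + 1) + 3 = (2 * (m + 1) + 2) + 1 by ring, pow_succ]; ring
    rw [e1, e2]
    exact frac_odd (A * b) B C D (b ^ (2 * m + 2)) (b ^ (2 * (m + 1) + 2))
      (hden_odd _) (hden_odd _) hpos
      (pow_le_pow_of_le_one hb0 hb1.le (by omega))
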